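/- If a trigonometric polynomial w(e^{it}) = \sum_{j=-m}^m c_j e^{ijt} with complex coefficients satisfies w(e^{it}) \ge 0 for all real t, then there exists an analytic polynomial p(z) = \sum_{j=0}^m a_j z^j such that w(e^{it}) = |p(e^{it})|^2 for all real t. -/

import Mathlib

/-!
Put `Q(z) = z^m w(z)`, a polynomial of degree at most `2m`, and induct on `m`.
Since `Q(z)/z^m` is real on the unit circle, `Q` equals its conjugate reciprocal
`z^{2m} conj (Q (1 / conj z))`, so its nonzero roots come in pairs `α, 1 / conj α`; a root `α` on
the circle is a zero, hence a critical point, of the nonnegative function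
`t ↦ Q(e^{it}) / e^{imt}`, so it is a double root. On the circle
`(z - α)(z - 1 / conj α) = -z |z - α|^2 / conj α`, so dividing such a pair out of `Q` divides
`Q(z)/z^m` by `|z - α|^2`, leaving a nonnegative function of the same kind with `m - 1` in place
of `m`; the factors `z - α` collected along the way form `p`.
-/

open scoped ComplexOrder

open Polynomial Complex ComplexConjugate Metric Filter Topology

lemma Complex.nontrivial_sphere_zero_one : (sphere (0 : ℂ) 1).Nontrivial :=
  ⟨1, by simp, -1, by simp, by norm_num⟩

lemma Complex.sphere_zero_one_infinite : (sphere (0 : ℂ) 1).Infinite :=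
  (isPreconnected_sphere (by simp [rank_real_complex]) 0 1).infinite_of_nontrivial
    nontrivial_sphere_zero_one

lemma Complex.preperfect_sphere_zero_one : Preperfect (sphere (0 : ℂ) 1) :=
  (isPreconnected_sphere (by simp [rank_real_complex]) 0 1).preperfect_of_nontrivial
    nontrivial_sphere_zero_one

lemma nonneg_on_sphere_of_ne {f : ℂ → ℂ} {α : ℂ} (hf : ContinuousAt f α)
    (h : ∀ z ∈ sphere (0 : ℂ) 1, z ≠ α → 0 ≤ f z) : ∀ z ∈ sphere (0 : ℂ) 1, 0 ≤ f z := by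
  intro z hz
  obtain rfl | hzα := eq_or_ne z α
  · have : (𝓝[≠] z ⊓ 𝓟 (sphere 0 1)).NeBot := Complex.preperfect_sphere_zero_one z hz
    refine isClosed_Ici.mem_of_tendsto (s := Set.Ici (0 : ℂ)) (b := 𝓝[≠] z ⊓ 𝓟 (sphere 0 1))
      (hf.tendsto.mono_left (inf_le_left.trans nhdsWithin_le_nhds)) ?_
    filter_upwards [mem_inf_of_left self_mem_nhdsWithin, mem_inf_of_right (mem_principal_self _)]
      with w hwz hw
    exact h w hw hwz
  · exact h z hz hzα

lemma Complex.exp_arg_mul_I_of_mem_sphere {z : ℂ} (hz : z ∈ sphere (0 : ℂ) 1) :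
    exp (arg z * I) = z := by
  simpa [mem_sphere_zero_iff_norm.1 hz] using norm_mul_exp_arg_mul_I z

lemma HasDerivAt.eq_zero_of_nonneg_of_eq_zero {g : ℝ → ℂ} {d : ℂ} {θ : ℝ}
    (hd : HasDerivAt g d θ) (hg : ∀ᶠ t in 𝓝 θ, 0 ≤ g t) (hθ : g θ = 0) : d = 0 := by
  have hre : HasDerivAt (fun t => (g t).re) d.re θ := reCLM.hasFDerivAt.comp_hasDerivAt θ hd
  have him : HasDerivAt (fun t => (g t).im) d.im θ := imCLM.hasFDerivAt.comp_hasDerivAt θ hd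
  refine Complex.ext ?_ ?_
  · refine IsLocalMin.hasDerivAt_eq_zero ?_ hre
    filter_upwards [hg] with t ht
    simpa [hθ] using (nonneg_iff.1 ht).1
  · have him_zero : (fun t => (g t).im) =ᶠ[𝓝 θ] fun _ => 0 :=
      hg.mono fun t ht => (nonneg_iff.1 ht).2.symm
    exact him.unique ((hasDerivAt_const θ 0).congr_of_eventuallyEq him_zero)

lemma Polynomial.eval_reflect {K : Type*} [Field K] {N : ℕ} {f : K[X]} (hf : f.natDegree ≤ N)
    {x : K} (hx : x ≠ 0) : (reflect N f).eval x = x ^ N * f.eval x⁻¹ := by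
  have : Invertible x⁻¹ := invertibleOfNonzero (inv_ne_zero hx)
  have h := eval₂_reflect_mul_pow (RingHom.id K) x⁻¹ N f hf
  simp only [invOf_eq_inv, inv_inv, eval₂_id] at h
  rw [← h, mul_left_comm, ← mul_pow, mul_inv_cancel₀ hx, one_pow, mul_one]

section SelfInversive

variable {m : ℕ} {Q : ℂ[X]}

lemma Polynomial.eval_reflect_map_conj_of_mem_sphere {N : ℕ} (hQ : Q.natDegree ≤ N) {z : ℂ}
    (hz : z ∈ sphere (0 : ℂ) 1) :
    (reflect N (Q.map (starRingEnd ℂ))).eval z = z ^ N * conj (Q.eval z) := by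
  have hz1 : ‖z‖ = 1 := mem_sphere_zero_iff_norm.1 hz
  rw [eval_reflect (natDegree_map_le.trans hQ) (norm_ne_zero_iff.1 (by simp [hz1])),
    inv_eq_conj hz1, eval_map, eval₂_at_apply]

lemma Polynomial.reflect_map_conj_eq_self (hdeg : Q.natDegree ≤ 2 * m)
    (hreal : ∀ z ∈ sphere (0 : ℂ) 1, (Q.eval z / z ^ m).im = 0) :
    reflect (2 * m) (Q.map (starRingEnd ℂ)) = Q := by
  refine eq_of_infinite_eval_eq _ _ (sphere_zero_one_infinite.mono fun z hz => ?_)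
  have hz0 : z ≠ 0 := ne_zero_of_mem_unit_sphere ⟨z, hz⟩
  have hconj := conj_eq_iff_im.2 (hreal z hz)
  rw [map_div₀, map_pow, ← inv_eq_conj (mem_sphere_zero_iff_norm.1 hz), inv_pow, div_inv_eq_mul,
    eq_div_iff (pow_ne_zero m hz0)] at hconj
  show _ = _
  rw [eval_reflect_map_conj_of_mem_sphere hdeg hz]
  linear_combination hconj

lemma Polynomial.coeff_two_mul_eq_conj_coeff_zero (hdeg : Q.natDegree ≤ 2 * m)
    (hreal : ∀ z ∈ sphere (0 : ℂ) 1, (Q.eval z / z ^ m).im = 0) :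
    Q.coeff (2 * m) = conj (Q.coeff 0) := by
  conv_lhs => rw [← reflect_map_conj_eq_self hdeg hreal]
  simp [coeff_reflect]

lemma Polynomial.isRoot_inv_conj (hdeg : Q.natDegree ≤ 2 * m)
    (hreal : ∀ z ∈ sphere (0 : ℂ) 1, (Q.eval z / z ^ m).im = 0) {α : ℂ} (hα : Q.IsRoot α)
    (hα0 : α ≠ 0) : Q.IsRoot (conj α)⁻¹ := by
  rw [IsRoot, ← reflect_map_conj_eq_self hdeg hreal,
    eval_reflect (natDegree_map_le.trans hdeg) (by simpa using hα0), inv_inv, eval_map,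
    eval₂_at_apply, hα.eq_zero, map_zero, mul_zero]

end SelfInversive

section NonnegOnSphere

variable {m : ℕ} {Q : ℂ[X]}

lemma Polynomial.isRoot_derivative_of_nonneg_on_sphere {α : ℂ}
    (hpos : ∀ z ∈ sphere (0 : ℂ) 1, 0 ≤ Q.eval z / z ^ m) (hα : α ∈ sphere (0 : ℂ) 1)
    (hroot : Q.IsRoot α) : Q.derivative.IsRoot α := by
  set e : ℝ → ℂ := fun t => exp (t * I)
  have he : ∀ t, HasDerivAt e (e t * I) t := fun t => by
    simpa using ((hasDerivAt_id (t : ℂ)).comp_ofReal.mul_const I).cexp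
  have he_mem : ∀ t, e t ∈ sphere (0 : ℂ) 1 := fun t => by simp [e, norm_exp_ofReal_mul_I]
  have heα : e (arg α) = α := exp_arg_mul_I_of_mem_sphere hα
  have hα0 : α ≠ 0 := ne_zero_of_mem_unit_sphere ⟨α, hα⟩
  have hd := (((Q.hasDerivAt (e (arg α))).comp (arg α) (he (arg α))).div
    ((he (arg α)).pow m) (pow_ne_zero m (exp_ne_zero _)))
  have := hd.eq_zero_of_nonneg_of_eq_zero (Eventually.of_forall fun t => hpos _ (he_mem t))
    (by simp [heα, hroot.eq_zero])
  simpa [heα, hroot.eq_zero, hα0, I_ne_zero] using this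

lemma Polynomial.X_sub_C_mul_X_sub_C_inv_conj_dvd (hdeg : Q.natDegree ≤ 2 * m)
    (hpos : ∀ z ∈ sphere (0 : ℂ) 1, 0 ≤ Q.eval z / z ^ m) (hQ : Q ≠ 0) {α : ℂ}
    (hα : Q.IsRoot α) (hα0 : α ≠ 0) : (X - C α) * (X - C (conj α)⁻¹) ∣ Q := by
  by_cases hα1 : ‖α‖ = 1
  · have hαα : (conj α)⁻¹ = α := by rw [← inv_eq_conj hα1, inv_inv]
    have hmult : 1 < Q.rootMultiplicity α := (one_lt_rootMultiplicity_iff_isRoot hQ).2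
      ⟨hα, isRoot_derivative_of_nonneg_on_sphere hpos (mem_sphere_zero_iff_norm.2 hα1) hα⟩
    rw [hαα, ← sq]
    exact (pow_dvd_pow _ hmult).trans (Q.pow_rootMultiplicity_dvd α)
  · have hne : α - (conj α)⁻¹ ≠ 0 := by
      intro h
      have hα2 : α * conj α = 1 := by
        nth_rw 1 [sub_eq_zero.1 h]
        exact inv_mul_cancel₀ (by simpa using hα0)
      rw [mul_conj', ← ofReal_pow, ofReal_eq_one, pow_eq_one_iff_of_nonneg (norm_nonneg α)
        two_ne_zero] at hα2
      exact hα1 hα2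
    have hreal z hz : (Q.eval z / z ^ m).im = 0 := (nonneg_iff.1 (hpos z hz)).2.symm
    exact (isCoprime_X_sub_C_of_isUnit_sub hne.isUnit).mul_dvd (dvd_iff_isRoot.2 hα)
      (dvd_iff_isRoot.2 (isRoot_inv_conj hdeg hreal hα hα0))

lemma Complex.sub_mul_sub_inv_conj_of_mem_sphere {z α : ℂ} (hz : z ∈ sphere (0 : ℂ) 1)
    (hα : α ≠ 0) : (z - α) * (z - (conj α)⁻¹) = -(conj α)⁻¹ * z * (‖z - α‖ : ℂ) ^ 2 := by
  have hz0 : z ≠ 0 := ne_zero_of_mem_unit_sphere ⟨z, hz⟩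
  have hα' : conj α ≠ 0 := by simpa using hα
  rw [← mul_conj', map_sub, ← inv_eq_conj (mem_sphere_zero_iff_norm.1 hz)]
  field_simp
  ring

lemma Polynomial.eval_mul_X_sub_C_inv_conj_div_pow_succ {α : ℂ} (hα : α ≠ 0) (R : ℂ[X]) {z : ℂ}
    (hz : z ∈ sphere (0 : ℂ) 1) :
    ((X - C α) * (X - C (conj α)⁻¹) * R).eval z / z ^ (m + 1) =
      (‖z - α‖ : ℂ) ^ 2 * ((C (-(conj α)⁻¹) * R).eval z / z ^ m) := by
  have hz0 : z ≠ 0 := ne_zero_of_mem_unit_sphere ⟨z, hz⟩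
  simp only [eval_mul, eval_sub, eval_X, eval_C]
  rw [sub_mul_sub_inv_conj_of_mem_sphere hz hα]
  field_simp
  ring

lemma Polynomial.nonneg_on_sphere_of_mul_X_sub_C_inv_conj {α : ℂ} (hα : α ≠ 0) {R : ℂ[X]}
    (hpos : ∀ z ∈ sphere (0 : ℂ) 1,
      0 ≤ ((X - C α) * (X - C (conj α)⁻¹) * R).eval z / z ^ (m + 1)) :
    ∀ z ∈ sphere (0 : ℂ) 1, 0 ≤ (C (-(conj α)⁻¹) * R).eval z / z ^ m := by
  refine nonneg_on_sphere_of_ne ((Polynomial.continuousAt _).div (continuousAt_pow α m)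
    (pow_ne_zero m hα)) fun z hz hzα => ?_
  have hnorm : 0 < ‖z - α‖ ^ 2 := by positivity [sub_ne_zero.2 hzα]
  have h := mul_nonneg (zero_le_real.2 (inv_nonneg.2 hnorm.le))
    (eval_mul_X_sub_C_inv_conj_div_pow_succ hα R hz ▸ hpos z hz)
  rwa [← mul_assoc, ← ofReal_pow, ← ofReal_mul, inv_mul_cancel₀ hnorm.ne', ofReal_one,
    one_mul] at h

lemma Polynomial.exists_eq_mul_X_sub_C_inv_conj (hdeg : Q.natDegree ≤ 2 * (m + 1))
    (hpos : ∀ z ∈ sphere (0 : ℂ) 1, 0 ≤ Q.eval z / z ^ (m + 1)) (h0 : Q.coeff 0 ≠ 0) :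
    ∃ α ≠ 0, ∃ R : ℂ[X], R.natDegree ≤ 2 * m ∧ Q = (X - C α) * (X - C (conj α)⁻¹) * R := by
  have hreal z hz : (Q.eval z / z ^ (m + 1)).im = 0 := (nonneg_iff.1 (hpos z hz)).2.symm
  have hQ : Q ≠ 0 := fun h => h0 (by simp [h])
  have htop : Q.natDegree = 2 * (m + 1) := le_antisymm hdeg <| le_natDegree_of_ne_zero <| by
    simpa [coeff_two_mul_eq_conj_coeff_zero hdeg hreal] using h0
  obtain ⟨α, hα⟩ := exists_root (f := Q) (by rw [degree_eq_natDegree hQ, htop]; norm_cast; omega)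
  have hα0 : α ≠ 0 := by rintro rfl; exact h0 (by simpa [coeff_zero_eq_eval_zero] using hα)
  obtain ⟨R, rfl⟩ := X_sub_C_mul_X_sub_C_inv_conj_dvd hdeg hpos hQ hα hα0
  refine ⟨α, hα0, R, ?_, rfl⟩
  have hmonic : ((X - C α) * (X - C (conj α)⁻¹)).Monic := (monic_X_sub_C α).mul (monic_X_sub_C _)
  rw [hmonic.natDegree_mul' (right_ne_zero_of_mul hQ),
    (monic_X_sub_C α).natDegree_mul (monic_X_sub_C _), natDegree_X_sub_C, natDegree_X_sub_C] at htop
  omega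

end NonnegOnSphere

theorem Polynomial.exists_eval_div_pow_eq_sq_norm (m : ℕ) (Q : ℂ[X])
    (hdeg : Q.natDegree ≤ 2 * m) (hpos : ∀ z ∈ sphere (0 : ℂ) 1, 0 ≤ Q.eval z / z ^ m) :
    ∃ P : ℂ[X], P.natDegree ≤ m ∧
      ∀ z ∈ sphere (0 : ℂ) 1, Q.eval z / z ^ m = (‖P.eval z‖ : ℂ) ^ 2 := by
  induction m generalizing Q with
  | zero =>
    obtain ⟨q, rfl⟩ : ∃ q, Q = C q := ⟨_, eq_C_of_natDegree_le_zero hdeg⟩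
    have hq : q = ‖q‖ := eq_coe_norm_of_nonneg (by simpa using hpos 1 (by simp))
    refine ⟨C (√‖q‖ : ℂ), by simp, fun z _ => ?_⟩
    rw [eval_C, eval_C, pow_zero, div_one, norm_real, Real.norm_of_nonneg (Real.sqrt_nonneg _),
      ← ofReal_pow, Real.sq_sqrt (norm_nonneg q), ← hq]
  | succ m ih =>
    by_cases h0 : Q.coeff 0 = 0
    · have hreal z hz : (Q.eval z / z ^ (m + 1)).im = 0 := (nonneg_iff.1 (hpos z hz)).2.symm
      have hdivX : ∀ z ≠ 0, Q.eval z / z ^ (m + 1) = Q.divX.eval z / z ^ m := fun z hz => by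
        conv_lhs => rw [← X_mul_divX_add Q]
        simp only [h0, eval_add, eval_mul, eval_X, eval_C, add_zero]
        field_simp
        ring
      have hdeg' : Q.natDegree ≤ 2 * (m + 1) - 1 :=
        natDegree_le_pred hdeg (by simp [coeff_two_mul_eq_conj_coeff_zero hdeg hreal, h0])
      obtain ⟨P, hP, hPeq⟩ := ih Q.divX (by rw [natDegree_divX_eq_natDegree_tsub_one]; omega)
        fun z hz => hdivX z (ne_zero_of_mem_unit_sphere ⟨z, hz⟩) ▸ hpos z hz
      refine ⟨P, hP.trans m.le_succ, fun z hz => ?_⟩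
      rw [hdivX z (ne_zero_of_mem_unit_sphere ⟨z, hz⟩), hPeq z hz]
    · obtain ⟨α, hα0, R, hR, rfl⟩ := exists_eq_mul_X_sub_C_inv_conj hdeg hpos h0
      obtain ⟨P, hP, hPeq⟩ := ih _ (natDegree_C_mul_le _ _ |>.trans hR)
        (nonneg_on_sphere_of_mul_X_sub_C_inv_conj hα0 hpos)
      refine ⟨(X - C α) * P, natDegree_mul_le.trans (by rw [natDegree_X_sub_C]; omega),
        fun z hz => ?_⟩
      rw [eval_mul_X_sub_C_inv_conj_div_pow_succ hα0 R hz, hPeq z hz]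
      simp only [eval_mul, eval_sub, eval_X, eval_C, norm_mul]
      push_cast
      ring

lemma Polynomial.natDegree_sum_C_mul_X_pow_toNat_le (m : ℕ) (c : ℤ → ℂ) :
    (∑ j ∈ Finset.Icc (-(m : ℤ)) m, C (c j) * X ^ (j + m).toNat).natDegree ≤ 2 * m :=
  natDegree_sum_le_of_forall_le _ _ fun j hj =>
    natDegree_C_mul_X_pow_le _ _ |>.trans (by rw [Finset.mem_Icc] at hj; omega)

lemma Polynomial.eval_sum_C_mul_X_pow_toNat_div_pow (m : ℕ) (c : ℤ → ℂ) {z : ℂ} (hz : z ≠ 0) :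
    (∑ j ∈ Finset.Icc (-(m : ℤ)) m, C (c j) * X ^ (j + m).toNat).eval z / z ^ m =
      ∑ j ∈ Finset.Icc (-(m : ℤ)) m, c j * z ^ j := by
  rw [eval_finsetSum, Finset.sum_div]
  refine Finset.sum_congr rfl fun j hj => ?_
  rw [Finset.mem_Icc] at hj
  rw [eval_mul, eval_C, eval_pow, eval_X, mul_div_assoc, ← zpow_natCast, ← zpow_natCast,
    ← zpow_sub₀ hz, Int.toNat_of_nonneg (by omega), add_sub_cancel_right]

theorem stmt_0 (m : ℕ) (c : ℤ → ℂ)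
    (hpos : ∀ t : ℝ, 0 ≤ ∑ j ∈ Finset.Icc (-(m : ℤ)) (m : ℤ),
        c j * Complex.exp ((j : ℂ) * (t : ℂ) * Complex.I)) :
    ∃ a : ℕ → ℂ, ∀ t : ℝ,
      ∑ j ∈ Finset.Icc (-(m : ℤ)) (m : ℤ), c j * Complex.exp ((j : ℂ) * (t : ℂ) * Complex.I)
        = ((‖∑ j ∈ Finset.range (m + 1),
            a j * Complex.exp ((j : ℂ) * (t : ℂ) * Complex.I)‖ : ℝ) : ℂ) ^ 2 := by
  set Q : ℂ[X] := ∑ j ∈ Finset.Icc (-(m : ℤ)) m, C (c j) * X ^ (j + m).toNat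
  have hQ (t : ℝ) : ∑ j ∈ Finset.Icc (-(m : ℤ)) m, c j * exp (j * t * I) =
      Q.eval (exp (t * I)) / exp (t * I) ^ m := by
    simp_rw [mul_assoc, exp_int_mul]
    exact (eval_sum_C_mul_X_pow_toNat_div_pow m c (exp_ne_zero _)).symm
  obtain ⟨P, hPdeg, hP⟩ := exists_eval_div_pow_eq_sq_norm m Q
    (natDegree_sum_C_mul_X_pow_toNat_le m c) fun z hz => by
      simpa only [hQ, exp_arg_mul_I_of_mem_sphere hz] using hpos (arg z)
  refine ⟨P.coeff, fun t => ?_⟩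
  rw [hQ, hP _ (by simp [norm_exp_ofReal_mul_I]), eval_eq_sum_range' (Nat.lt_succ_of_le hPdeg)]
  simp_rw [mul_assoc, exp_nat_mul]
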